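/- Let (T,w) be a hierarchy on a finite set 𝒳 inducing the kernel k(x,y) = w(LCA(x,y)), let ω be its additive weight function, and let X, Y be n-element finite subsets of 𝒳. Then for every bijection B from X to Y, Σ_{x∈X} k(x, B(x)) ≤ Σ_{v ∈ V(T)} min(|X_v|, |Y_v|) · ω(v), where S_v denotes the set of elements of S ⊆ 𝒳 that are descendants of v. -/

import Mathlib

open scoped Classical

structure Hierarchy (𝒳 : Type) where
  V : Type
  [fintypeV : Fintype V]
  leaf : 𝒳 → V
  leaf_inj : Function.Injective leaf
  root : V
  parent : V → V
  parent_root : parent root = root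
  reaches_root : ∀ v : V, ∃ n : ℕ, parent^[n] v = root
  leaf_iff : ∀ v : V, (∀ u : V, parent u = v → u = v) ↔ v ∈ Set.range leaf
  w : V → NNReal
  w_le : ∀ v : V, w (parent v) ≤ w v

attribute [instance] Hierarchy.fintypeV

namespace Hierarchy

variable {𝒳 : Type} (H : Hierarchy 𝒳)

/-- `u` is an ancestor of `v` (i.e. `u` lies on the iterated-parent path from `v` to the root). -/
def IsAncestor (v u : H.V) : Prop := ∃ n : ℕ, H.parent^[n] v = u

/-- The depth of a vertex: the number of edges on the path to the root. -/
noncomputable def depth (v : H.V) : ℕ := sInf {n : ℕ | H.parent^[n] v = H.root}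

/-- `u` is a lowest common ancestor of `x` and `y`: a common ancestor of maximal depth. -/
def IsLCA (x y u : H.V) : Prop :=
  H.IsAncestor x u ∧ H.IsAncestor y u ∧
    ∀ u' : H.V, H.IsAncestor x u' → H.IsAncestor y u' → H.depth u' ≤ H.depth u

/-- The additive weight function `ω`. -/
noncomputable def omega (v : H.V) : NNReal :=
  if v = H.root then H.w v else H.w v - H.w (H.parent v)

end Hierarchy

/-!
Unfolding `w` along root paths, `w c = ∑ ω u` over the ancestors `u` of `c`, and the ancestors
of `LCA(x, y)` are exactly the common ancestors of `x` and `y`. Hence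
`∑ₓ k(x, B x) = ∑ᵥ #{x ∈ X | v is an ancestor of x and of B x} · ω v`, and for each `v` that
count is at most `|X_v|` (via `x ↦ x`) and at most `|Y_v|` (via `x ↦ B x`).
-/

namespace Hierarchy

variable {𝒳 : Type} (H : Hierarchy 𝒳)

lemma iterate_parent_depth (v : H.V) : H.parent^[H.depth v] v = H.root :=
  Nat.sInf_mem (H.reaches_root v)

lemma depth_le_of_iterate_parent {v : H.V} {n : ℕ} (h : H.parent^[n] v = H.root) :
    H.depth v ≤ n :=
  Nat.sInf_le h

lemma depth_root : H.depth H.root = 0 :=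
  Nat.le_zero.mp (H.depth_le_of_iterate_parent (n := 0) rfl)

lemma depth_parent_le (v : H.V) : H.depth (H.parent v) ≤ H.depth v :=
  H.depth_le_of_iterate_parent <| by
    rw [← Function.iterate_succ_apply, Function.iterate_succ_apply', iterate_parent_depth,
      parent_root]

lemma depth_parent_lt {v : H.V} (hv : v ≠ H.root) : H.depth (H.parent v) < H.depth v := by
  have hpos : H.depth v ≠ 0 := fun h => hv (by simpa [h] using H.iterate_parent_depth v)
  have : H.parent^[H.depth v - 1] (H.parent v) = H.root := by
    rw [← Function.iterate_succ_apply, Nat.succ_eq_add_one, Nat.sub_add_cancel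
      (Nat.one_le_iff_ne_zero.mpr hpos), iterate_parent_depth]
  have := H.depth_le_of_iterate_parent this
  omega

variable {H}

lemma IsAncestor.refl (v : H.V) : H.IsAncestor v v := ⟨0, rfl⟩

lemma IsAncestor.trans {a b c : H.V} (hab : H.IsAncestor a b) (hbc : H.IsAncestor b c) :
    H.IsAncestor a c := by
  obtain ⟨n, rfl⟩ := hab
  obtain ⟨m, rfl⟩ := hbc
  exact ⟨m + n, Function.iterate_add_apply _ _ _ _⟩

lemma isAncestor_iff_eq_or_isAncestor_parent {v u : H.V} :
    H.IsAncestor v u ↔ u = v ∨ H.IsAncestor (H.parent v) u := by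
  constructor
  · rintro ⟨_ | n, rfl⟩
    · exact Or.inl rfl
    · exact Or.inr ⟨n, rfl⟩
  · rintro (rfl | ⟨n, rfl⟩)
    · exact .refl _
    · exact ⟨n + 1, rfl⟩

lemma IsAncestor.depth_le {v u : H.V} (h : H.IsAncestor v u) : H.depth u ≤ H.depth v := by
  obtain ⟨n, rfl⟩ := h
  induction n with
  | zero => rfl
  | succ n ih =>
    rw [Function.iterate_succ_apply']
    exact (H.depth_parent_le _).trans ih

lemma IsAncestor.eq_of_depth_le {v u : H.V} (h : H.IsAncestor v u)
    (hd : H.depth v ≤ H.depth u) : u = v := by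
  by_cases hv : v = H.root
  · obtain ⟨n, rfl⟩ := h
    subst hv
    exact Function.iterate_fixed H.parent_root n
  rcases isAncestor_iff_eq_or_isAncestor_parent.mp h with rfl | hp
  · rfl
  · have := hp.depth_le
    have := H.depth_parent_lt hv
    omega

lemma not_isAncestor_parent {v : H.V} (hv : v ≠ H.root) : ¬ H.IsAncestor (H.parent v) v :=
  fun h => (H.depth_parent_lt hv).not_ge h.depth_le

lemma IsAncestor.isAncestor_of_depth_le {x u u' : H.V} (hu : H.IsAncestor x u)
    (hu' : H.IsAncestor x u') (hd : H.depth u' ≤ H.depth u) : H.IsAncestor u u' := by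
  obtain ⟨n, rfl⟩ := hu
  obtain ⟨m, rfl⟩ := hu'
  rcases le_total n m with hnm | hmn
  · exact ⟨m - n, by rw [← Function.iterate_add_apply, Nat.sub_add_cancel hnm]⟩
  · have h : H.IsAncestor (H.parent^[m] x) (H.parent^[n] x) :=
      ⟨n - m, by rw [← Function.iterate_add_apply, Nat.sub_add_cancel hmn]⟩
    rw [h.eq_of_depth_le hd]
    exact .refl _

lemma IsLCA.isAncestor_iff {a b c : H.V} (h : H.IsLCA a b c) {u : H.V} :
    H.IsAncestor c u ↔ H.IsAncestor a u ∧ H.IsAncestor b u := by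
  obtain ⟨hac, hbc, hdeepest⟩ := h
  refine ⟨fun hcu => ⟨hac.trans hcu, hbc.trans hcu⟩, fun ⟨hau, hbu⟩ => ?_⟩
  exact hac.isAncestor_of_depth_le hau (hdeepest u hau hbu)

variable (H)

lemma w_eq_sum_omega_ancestors (v : H.V) :
    H.w v = ∑ u ∈ Finset.univ.filter (H.IsAncestor v), H.omega u := by
  induction hd : H.depth v using Nat.strong_induction_on generalizing v with
  | _ d ih =>
  by_cases hv : v = H.root
  · subst hv
    have : Finset.univ.filter (H.IsAncestor H.root) = {H.root} := by
      ext u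
      simp only [Finset.mem_filter, Finset.mem_univ, true_and, Finset.mem_singleton]
      exact ⟨fun h => h.eq_of_depth_le (H.depth_root ▸ Nat.zero_le _), fun h => h ▸ .refl _⟩
    simp [this, omega]
  · have hsplit : Finset.univ.filter (H.IsAncestor v)
        = insert v (Finset.univ.filter (H.IsAncestor (H.parent v))) := by
      ext u
      simp [isAncestor_iff_eq_or_isAncestor_parent (v := v)]
    rw [hsplit, Finset.sum_insert (by simpa using not_isAncestor_parent hv),
      ← ih _ (hd ▸ H.depth_parent_lt hv) _ rfl, omega, if_neg hv,
      tsub_add_cancel_of_le (H.w_le v)]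

variable {H} in
lemma IsLCA.w_eq_sum_omega {a b c : H.V} (h : H.IsLCA a b c) :
    H.w c = ∑ u : H.V, if H.IsAncestor a u ∧ H.IsAncestor b u then H.omega u else 0 := by
  simp only [w_eq_sum_omega_ancestors H c, Finset.sum_filter, h.isAncestor_iff]

end Hierarchy

namespace Finset

lemma card_filter_and_equiv_le_min {α : Type*} {X Y : Finset α} (B : X ≃ Y)
    (P : α → Prop) :
    #{x : X | P x ∧ P (B x)} ≤ min #{a ∈ X | P a} #{a ∈ Y | P a} := by
  refine le_min (card_le_card_of_injOn (fun x => (x : α)) ?_ Subtype.val_injective.injOn)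
    (card_le_card_of_injOn (fun x => (B x : α)) ?_ (Subtype.val_injective.comp B.injective).injOn)
  · intro x hx
    simp only [coe_filter, Set.mem_ofPred_eq, mem_univ, true_and] at hx ⊢
    exact ⟨x.2, hx.1⟩
  · intro x hx
    simp only [coe_filter, Set.mem_ofPred_eq, mem_univ, true_and] at hx ⊢
    exact ⟨(B x).2, hx.2⟩

end Finset

theorem assignment_le_histogram_intersection_general {𝒳 : Type}
    (H : Hierarchy 𝒳) (lca : 𝒳 → 𝒳 → H.V)
    (hlca : ∀ x y : 𝒳, H.IsLCA (H.leaf x) (H.leaf y) (lca x y))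
    (X Y : Finset 𝒳)
    (B : {x // x ∈ X} ≃ {y // y ∈ Y}) :
    ∑ x : {x // x ∈ X}, H.w (lca (x : 𝒳) ((B x : 𝒳)))
      ≤ ∑ v : H.V,
          ((min ((X.filter fun a => H.IsAncestor (H.leaf a) v).card)
                ((Y.filter fun a => H.IsAncestor (H.leaf a) v).card) : ℕ) : NNReal)
            * H.omega v := by
  calc ∑ x : {x // x ∈ X}, H.w (lca (x : 𝒳) ((B x : 𝒳)))
      = ∑ v : H.V, ∑ x : {x // x ∈ X},
          if H.IsAncestor (H.leaf x) v ∧ H.IsAncestor (H.leaf (B x)) v then H.omega v else 0 := by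
        rw [Finset.sum_comm]
        exact Finset.sum_congr rfl fun x _ => (hlca _ _).w_eq_sum_omega
    _ = ∑ v : H.V, ((Finset.univ.filter fun x : {x // x ∈ X} =>
          H.IsAncestor (H.leaf x) v ∧ H.IsAncestor (H.leaf (B x)) v).card : NNReal) * H.omega v := by
        simp only [← Finset.sum_filter, Finset.sum_const, nsmul_eq_mul]
    _ ≤ _ := by
        gcongr with v
        exact Finset.card_filter_and_equiv_le_min B fun a => H.IsAncestor (H.leaf a) v

/-- For a hierarchy inducing the kernel `k x y = w (LCA x y)`, every bijection
`B` between `n`-element subsets `X, Y` has assignment weight at most the histogram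
intersection `∑_v min |X_v| |Y_v| * ω v`. -/
theorem assignment_le_histogram_intersection {𝒳 : Type} [Fintype 𝒳]
    (H : Hierarchy 𝒳) (lca : 𝒳 → 𝒳 → H.V)
    (hlca : ∀ x y : 𝒳, H.IsLCA (H.leaf x) (H.leaf y) (lca x y))
    (n : ℕ) (X Y : Finset 𝒳) (hX : X.card = n) (hY : Y.card = n)
    (B : {x // x ∈ X} ≃ {y // y ∈ Y}) :
    ∑ x : {x // x ∈ X}, H.w (lca (x : 𝒳) ((B x : 𝒳)))
      ≤ ∑ v : H.V,
          ((min ((X.filter fun a => H.IsAncestor (H.leaf a) v).card)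
                ((Y.filter fun a => H.IsAncestor (H.leaf a) v).card) : ℕ) : NNReal)
            * H.omega v :=
  assignment_le_histogram_intersection_general H lca hlca X Y B
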